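/- arXiv:1204.0641 — 9 statements merged into one kernel-verified Lean document; each statement's English description precedes it below -/
import Mathlib

section
/- Let C be a set of processes with |C| ≥ 2 that forms an I-vertex-stable strongly connected component for I = [r,s]. If s ≥ r + |C| − 2, then for every starting round r' with r ≤ r' ≤ s − |C| + 2 and every pair p, q ∈ C, the causal distance cd_{r'}(p,q) is at most |C| − 1; hence the causal diameter D(C^I) ≤ |C| − 1. -/
open scoped Classical

def causalChain {V : Type*} (G : ℕ → V → V → Prop) (r : ℕ) (p q : V) (k : ℕ) : Prop :=
  ∃ f : ℕ → V, f 0 = p ∧ f k = q ∧ ∀ i < k, G (r + i) (f i) (f (i + 1)) ∨ f i = f (i + 1)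

noncomputable def cd {V : Type*} (G : ℕ → V → V → Prop) (r : ℕ) (p q : V) : ℕ∞ :=
  sInf {k : ℕ∞ | ∃ n : ℕ, k = n ∧ 1 ≤ n ∧ causalChain G r p q n}

/-- Reachability by a directed path. -/
def reach {V : Type*} (G : V → V → Prop) : V → V → Prop := Relation.ReflTransGen G

/-- The induced subgraph of `G` on `C` is strongly connected. -/
def inducedStronglyConnected {V : Type*} (G : V → V → Prop) (C : Set V) : Prop :=
  ∀ p ∈ C, ∀ q ∈ C, Relation.ReflTransGen (fun a b => G a b ∧ a ∈ C ∧ b ∈ C) p q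

/-- `C` is a (maximal) strongly connected component of `G`:
a nonempty mutual-reachability equivalence class. -/
def isSCC {V : Type*} (G : V → V → Prop) (C : Set V) : Prop :=
  C.Nonempty ∧ ∀ p ∈ C, ∀ v, v ∈ C ↔ (reach G p v ∧ reach G v p)

/-- `C` is an `[r,s]`-vertex-stable strongly connected component of the
dynamic network `G`. -/
def vertexStableSCC {V : Type*} (G : ℕ → V → V → Prop) (r s : ℕ) (C : Set V) : Prop :=
  ∀ x, r ≤ x → x ≤ s → inducedStronglyConnected (G x) C ∧ isSCC (G x) C

/-- The round-`x` causal diameter of the set `C`. -/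
noncomputable def roundCausalDiam {V : Type*} (G : ℕ → V → V → Prop) (x : ℕ)
    (C : Finset V) : ℕ∞ :=
  ⨆ p ∈ C, ⨆ q ∈ C, cd G x p q

/-- Round `x` is "valid" in `[r,s]`: `x ∈ [r,s]` and `x + D^x(C) − 1 ≤ s`. -/
def validRound {V : Type*} (G : ℕ → V → V → Prop) (r s : ℕ) (C : Finset V) (x : ℕ) : Prop :=
  r ≤ x ∧ x ≤ s ∧ (x : ℕ∞) + roundCausalDiam G x C ≤ (s : ℕ∞) + 1

/-- The causal diameter `D(C^I)` for `I = [r,s]`: the largest round-`x` causal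
diameter over valid rounds `x ∈ I` (with `x + D^x(C) − 1 ≤ s`), or `∞` if there
is no valid round. -/
noncomputable def causalDiam {V : Type*} (G : ℕ → V → V → Prop) (r s : ℕ)
    (C : Finset V) : ℕ∞ :=
  if ∃ x, validRound G r s C x then
    sSup {d : ℕ∞ | ∃ x, validRound G r s C x ∧ roundCausalDiam G x C = d}
  else ⊤

lemma causalChain_extend {V : Type*} {G : ℕ → V → V → Prop} {r : ℕ} {p a b : V} {i : ℕ}
    (h : causalChain G r p a i) (hab : G (r + i) a b ∨ a = b) :
    causalChain G r p b (i + 1) := by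
  obtain ⟨f, hf0, hfk, hstep⟩ := h
  refine ⟨fun j => if j ≤ i then f j else b, by simp [hf0], by simp, ?_⟩
  intro j hj
  rcases Nat.lt_or_ge j i with hji | hji
  · simpa [Nat.le_of_lt hji, Nat.succ_le_of_lt hji] using hstep j hji
  · have hji' : j = i := by omega
    subst hji'
    simp only [le_refl, if_pos, Nat.lt_irrefl]
    rw [if_neg (by omega), hfk]
    exact hab

/-- Main chain-exists lemma. -/
lemma chain_of_connected {V : Type*} (G : ℕ → V → V → Prop) (r' : ℕ) (C : Finset V)
    (hcard : 2 ≤ C.card)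
    (hconn : ∀ i < C.card - 1, inducedStronglyConnected (G (r' + i)) (↑C : Set V))
    {p q : V} (hp : p ∈ C) (hq : q ∈ C) :
    causalChain G r' p q (C.card - 1) := by
  set n := C.card - 1 with hn
  set S : ℕ → Finset V := fun i => C.filter (fun v => causalChain G r' p v i) with hS
  have hSsub : ∀ i, S i ⊆ C := fun i => Finset.filter_subset _ _
  have hmemS : ∀ i v, v ∈ S i ↔ v ∈ C ∧ causalChain G r' p v i := by
    intro i v; simp [hS]
  have hp0 : p ∈ S 0 := (hmemS 0 p).2 ⟨hp, ⟨fun _ => p, rfl, rfl, by omega⟩⟩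
  have hmono : ∀ i, S i ⊆ S (i + 1) := by
    intro i v hv
    obtain ⟨hvC, hch⟩ := (hmemS i v).1 hv
    exact (hmemS (i+1) v).2 ⟨hvC, causalChain_extend hch (Or.inr rfl)⟩
  have hpi : ∀ j, p ∈ S j := by
    intro j
    induction j with
    | zero => exact hp0
    | succ j ih => exact hmono j ih
  have hgrow : ∀ i < n, S i ⊂ C → (S i).card + 1 ≤ (S (i+1)).card := by
    intro i hi hsub
    obtain ⟨v, hvC, hvS⟩ := Finset.exists_of_ssubset hsub
    have hreach := (hconn i hi) p (by exact_mod_cast hp) v (by exact_mod_cast hvC)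
    have key : ∀ w, Relation.ReflTransGen
        (fun a b => G (r' + i) a b ∧ a ∈ (↑C : Set V) ∧ b ∈ (↑C : Set V)) p w →
        w ∈ S i ∨ ∃ b, b ∈ S (i+1) ∧ b ∉ S i := by
      intro w hw
      induction hw with
      | refl => exact Or.inl (hpi i)
      | tail _ hcv ih =>
        rcases ih with hc | hex
        · rename_i c w' _
          by_cases hw' : w' ∈ S i
          · exact Or.inl hw'
          · refine Or.inr ⟨w', ?_, hw'⟩
            obtain ⟨hcC, hch⟩ := (hmemS i c).1 hc
            exact (hmemS (i+1) w').2 ⟨by exact_mod_cast hcv.2.2,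
              causalChain_extend hch (Or.inl hcv.1)⟩
        · exact Or.inr hex
    rcases key v hreach with hvS' | ⟨b, hb1, hb2⟩
    · exact absurd hvS' hvS
    · calc (S i).card + 1 = (insert b (S i)).card := by
            rw [Finset.card_insert_of_notMem hb2]
        _ ≤ (S (i+1)).card := Finset.card_le_card (by
            intro x hx
            rcases Finset.mem_insert.1 hx with h | h
            · subst h; exact hb1
            · exact hmono i h)
  have key2 : ∀ i ≤ n, q ∈ S i ∨ i + 1 ≤ (S i).card := by
    intro i
    induction i with
    | zero => intro _; exact Or.inr (Finset.card_pos.2 ⟨p, hp0⟩)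
    | succ i ih =>
      intro hi
      rcases ih (by omega) with hq' | hcardi
      · exact Or.inl (hmono i hq')
      · by_cases hfull : S i = C
        · exact Or.inl (hmono i (by rw [hfull]; exact hq))
        · have : S i ⊂ C := Finset.ssubset_iff_subset_ne.2 ⟨hSsub i, hfull⟩
          exact Or.inr (by have := hgrow i (by omega) this; omega)
  have hqn : q ∈ S n := by
    rcases key2 n le_rfl with h | h
    · exact h
    · have : S n = C := Finset.eq_of_subset_of_card_le (hSsub n) (by omega)
      rw [this]; exact hq
  exact ((hmemS n q).1 hqn).2

/-- If `C` (with `|C| ≥ 2`) is an `[r,s]`-vertex-stable strongly connected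
component and `s ≥ r + |C| − 2`, then for every starting round
`r' ∈ [r, s − |C| + 2]` and all `p, q ∈ C` we have `cd_{r'}(p,q) ≤ |C| − 1`;
hence `D(C^I) ≤ |C| − 1`. -/
theorem bound_on_causal_diameter {V : Type*} (G : ℕ → V → V → Prop) (r s : ℕ)
    (C : Finset V) (hcard : 2 ≤ C.card)
    (hstable : vertexStableSCC G r s (↑C : Set V))
    (hs : r + C.card ≤ s + 2) :
    (∀ r', r ≤ r' → r' + C.card ≤ s + 2 →
      ∀ p ∈ C, ∀ q ∈ C, cd G r' p q ≤ (C.card - 1 : ℕ)) ∧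
    causalDiam G r s C ≤ (C.card - 1 : ℕ) := by
  have part1 : ∀ r', r ≤ r' → r' + C.card ≤ s + 2 →
      ∀ p ∈ C, ∀ q ∈ C, cd G r' p q ≤ (C.card - 1 : ℕ) := by
    intro r' hrr' hr's p hp q hq
    have hconn : ∀ i < C.card - 1, inducedStronglyConnected (G (r' + i)) (↑C : Set V) := by
      intro i hi
      exact (hstable (r' + i) (by omega) (by omega)).1
    have hchain := chain_of_connected G r' C hcard hconn hp hq
    exact sInf_le ⟨C.card - 1, rfl, by omega, hchain⟩
  refine ⟨part1, ?_⟩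
  have hdiam : ∀ x, r ≤ x → x + C.card ≤ s + 2 →
      roundCausalDiam G x C ≤ ((C.card - 1 : ℕ) : ℕ∞) := by
    intro x h1 h2
    exact iSup₂_le fun p hp => iSup₂_le fun q hq => part1 x h1 h2 p hp q hq
  have hvalid : validRound G r s C r := by
    refine ⟨le_refl r, by omega, ?_⟩
    calc (r : ℕ∞) + roundCausalDiam G r C ≤ (r : ℕ∞) + ((C.card - 1 : ℕ) : ℕ∞) :=
          add_le_add_right (hdiam r le_rfl hs) _
      _ = ((r + (C.card - 1) : ℕ) : ℕ∞) := by push_cast; ring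
      _ ≤ ((s + 1 : ℕ) : ℕ∞) := Nat.cast_le.2 (by omega)
      _ = (s : ℕ∞) + 1 := by push_cast; ring
  rw [causalDiam, if_pos ⟨r, hvalid⟩]
  refine sSup_le ?_
  rintro d ⟨x, ⟨hrx, hxs, hxd⟩, rfl⟩
  by_cases hcase : x + C.card ≤ s + 2
  · exact hdiam x hrx hcase
  · have hle : (x : ℕ∞) + roundCausalDiam G x C ≤ (x : ℕ∞) + ((C.card - 2 : ℕ) : ℕ∞) := by
      calc (x : ℕ∞) + roundCausalDiam G x C ≤ (s : ℕ∞) + 1 := hxd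
        _ = ((s + 1 : ℕ) : ℕ∞) := by push_cast; ring
        _ ≤ ((x + (C.card - 2) : ℕ) : ℕ∞) := Nat.cast_le.2 (by omega)
        _ = (x : ℕ∞) + ((C.card - 2 : ℕ) : ℕ∞) := by push_cast; ring
    have := (WithTop.add_le_add_iff_left (by exact_mod_cast WithTop.natCast_ne_top x)).1 hle
    exact this.trans (Nat.cast_le.2 (by omega))
end

section
/- Let C be an I-vertex-stable strongly connected component with |C| ≥ 2 and finite causal diameter D(C^I) for I = [r,s], and let x be the maximal round such that x + D^x(C) − 1 ≤ s. Then (i) for every x' ∈ [r,x], x' + D^{x'}(C) − 1 ≤ s and D^{x'}(C) ≤ D(C^I); and (ii) x ≥ max{s − |C| + 2, r}. -/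
open scoped Classical

section Aux
variable {V : Type*} {G : ℕ → V → V → Prop} {r : ℕ} {p q : V}

lemma causalChain_stutter {k : ℕ} (h : causalChain G r p q k) :
    causalChain G r p q (k + 1) := by
  obtain ⟨f, h0, hk, hstep⟩ := h
  refine ⟨fun i => if i ≤ k then f i else q, by simp [h0], by simp, ?_⟩
  intro i hi
  rcases lt_or_eq_of_le (Nat.lt_succ_iff.mp hi) with hik | hik
  · have h1 : i ≤ k := hik.le
    have h2 : i + 1 ≤ k := Nat.succ_le_of_lt hik
    simp only [if_pos h1, if_pos h2]
    exact hstep i hik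
  · subst hik
    right
    simp [hk]

lemma causalChain_step {k : ℕ} {a b : V} (h : causalChain G r p a k)
    (hab : G (r + k) a b) : causalChain G r p b (k + 1) := by
  obtain ⟨f, h0, hk, hstep⟩ := h
  refine ⟨fun i => if i = k + 1 then b else f i,
    by simp only [if_neg (by omega : (0 : ℕ) ≠ k + 1)]; exact h0, by simp, ?_⟩
  intro i hi
  rcases lt_or_eq_of_le (Nat.lt_succ_iff.mp hi) with hik | hik
  · have e1 : i ≠ k + 1 := by omega
    have e2 : i + 1 ≠ k + 1 := by omega
    simp only [if_neg e1, if_neg e2]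
    exact hstep i hik
  · subst hik
    left
    have e : i ≠ i + 1 := by omega
    simp only [if_neg e, if_pos rfl, hk]
    exact hab

lemma causalChain_shift {k : ℕ} (h : causalChain G (r + 1) p q k) :
    causalChain G r p q (k + 1) := by
  obtain ⟨f, h0, hk, hstep⟩ := h
  refine ⟨fun i => if i = 0 then p else f (i - 1), by simp, ?_, ?_⟩
  · simp only [if_neg (by omega : k + 1 ≠ 0), Nat.add_sub_cancel]
    exact hk
  · intro i hi
    match i with
    | 0 => right; simp [h0]
    | (j + 1) =>
      have e1 : j + 1 ≠ 0 := by omega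
      have e2 : j + 1 + 1 ≠ 0 := by omega
      simp only [if_neg e1, if_neg e2, Nat.add_sub_cancel]
      have e3 : r + (j + 1) = r + 1 + j := by omega
      rw [e3]
      exact hstep j (by omega)

lemma cd_le_of_chain {n : ℕ} (hn : 1 ≤ n) (h : causalChain G r p q n) :
    cd G r p q ≤ (n : ℕ∞) :=
  sInf_le ⟨n, rfl, hn, h⟩

lemma cd_succ_le : cd G r p q ≤ cd G (r + 1) p q + 1 := by
  rcases eq_or_ne (cd G (r + 1) p q) ⊤ with h | h
  · simp [h]
  · have hne : {k : ℕ∞ | ∃ n : ℕ, k = n ∧ 1 ≤ n ∧ causalChain G (r + 1) p q n}.Nonempty := by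
      by_contra hc
      rw [Set.not_nonempty_iff_eq_empty] at hc
      exact h (by simp [cd, hc])
    have hmem := csInf_mem hne
    obtain ⟨n, hn, h1, hchain⟩ := hmem
    have hle : cd G r p q ≤ ((n + 1 : ℕ) : ℕ∞) :=
      cd_le_of_chain (by omega) (causalChain_shift hchain)
    calc cd G r p q ≤ ((n + 1 : ℕ) : ℕ∞) := hle
      _ = (n : ℕ∞) + 1 := by push_cast; ring
      _ = cd G (r + 1) p q + 1 := by rw [cd, ← hn]

lemma cd_le_roundCausalDiam {C : Finset V} (hp : p ∈ C) (hq : q ∈ C) :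
    cd G r p q ≤ roundCausalDiam G r C := by
  calc cd G r p q ≤ ⨆ q ∈ C, cd G r p q := le_biSup _ hq
    _ ≤ roundCausalDiam G r C := le_biSup (fun p => ⨆ q ∈ C, cd G r p q) hp

lemma roundCausalDiam_succ_le {C : Finset V} :
    roundCausalDiam G r C ≤ roundCausalDiam G (r + 1) C + 1 := by
  refine iSup₂_le fun p hp => iSup₂_le fun q hq => ?_
  calc cd G r p q ≤ cd G (r + 1) p q + 1 := cd_succ_le
    _ ≤ roundCausalDiam G (r + 1) C + 1 :=
        add_le_add_left (cd_le_roundCausalDiam hp hq) 1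

lemma crossing_edge {rel : V → V → Prop} {S : Set V} {u w : V}
    (h : Relation.ReflTransGen rel u w) (hu : u ∈ S) (hw : w ∉ S) :
    ∃ a b, a ∈ S ∧ b ∉ S ∧ rel a b := by
  induction h with
  | refl => exact absurd hu hw
  | @tail b c h1 h2 ih =>
    by_cases hb : b ∈ S
    · exact ⟨b, c, hb, hw, h2⟩
    · exact ih hb

open scoped Classical in
lemma propagation {C : Finset V} (hcard : 2 ≤ C.card) (y : ℕ)
    (hconn : ∀ i, i < C.card - 1 → inducedStronglyConnected (G (y + i)) (↑C : Set V))
    (hp : p ∈ C) (hq : q ∈ C) : causalChain G y p q (C.card - 1) := by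
  set m := C.card with hm
  set S : ℕ → Finset V := fun k => C.filter (fun v => causalChain G y p v k) with hS
  have hS0 : p ∈ S 0 := by
    simp only [hS, Finset.mem_filter]
    exact ⟨hp, fun _ => p, rfl, rfl, by omega⟩
  have hSsub : ∀ k, S k ⊆ C := fun k => Finset.filter_subset _ _
  have hmono : ∀ k, S k ⊆ S (k + 1) := by
    intro k v hv
    simp only [hS, Finset.mem_filter] at hv ⊢
    exact ⟨hv.1, causalChain_stutter hv.2⟩
  have hSp : ∀ k, p ∈ S k := by
    intro k
    induction k with
    | zero => exact hS0
    | succ n ih => exact hmono n ih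
  have key : ∀ k, k ≤ m - 1 → S k = C ∨ k + 1 ≤ (S k).card := by
    intro k
    induction k with
    | zero =>
      intro _
      right
      exact Finset.card_pos.mpr ⟨p, hS0⟩
    | succ n ih =>
      intro hn
      rcases ih (by omega) with hc | hc
      · left
        exact Finset.Subset.antisymm (hSsub _) (hc ▸ hmono n)
      · by_cases heq : S n = C
        · left
          exact Finset.Subset.antisymm (hSsub _) (heq ▸ hmono n)
        · right
          obtain ⟨w, hwC, hwS⟩ : ∃ w, w ∈ C ∧ w ∉ S n := by
            by_contra hcon
            push_neg at hcon
            exact heq (Finset.Subset.antisymm (hSsub n) hcon)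
          have hconn' := hconn n (by omega)
          have hreach := hconn' p hp w hwC
          obtain ⟨a, b, ha, hb, hab⟩ :=
            crossing_edge (S := (↑(S n) : Set V)) hreach (by exact_mod_cast hSp n)
              (by exact_mod_cast hwS)
          have haS : a ∈ S n := by exact_mod_cast ha
          have hbS : b ∉ S n := by exact_mod_cast hb
          have hbC : b ∈ C := hab.2.2
          have hchain_a : causalChain G y p a n := (Finset.mem_filter.mp haS).2
          have hbS1 : b ∈ S (n + 1) := by
            simp only [hS, Finset.mem_filter]
            exact ⟨hbC, causalChain_step hchain_a hab.1⟩
          have hins : insert b (S n) ⊆ S (n + 1) := by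
            intro v hv
            rcases Finset.mem_insert.mp hv with h | h
            · exact h ▸ hbS1
            · exact hmono n h
          calc n + 1 + 1 ≤ (S n).card + 1 := by omega
            _ = (insert b (S n)).card := (Finset.card_insert_of_notMem hbS).symm
            _ ≤ (S (n + 1)).card := Finset.card_le_card hins
  have hfinal : S (m - 1) = C := by
    rcases key (m - 1) le_rfl with h | h
    · exact h
    · apply Finset.eq_of_subset_of_card_le (hSsub _)
      omega
  have hqS : q ∈ S (m - 1) := hfinal ▸ hq
  exact (Finset.mem_filter.mp hqS).2

end Aux

/-- Let `C` be an `[r,s]`-vertex-stable SCC with `|C| ≥ 2` and finite causal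
diameter `D(C^I)`, and let `x` be the maximal round with `x + D^x(C) − 1 ≤ s`.
Then (i) every `x' ∈ [r,x]` also satisfies `x' + D^{x'}(C) − 1 ≤ s` and
`D^{x'}(C) ≤ D(C^I)`; and (ii) `x ≥ max (s − |C| + 2) r`. -/
theorem information_propagation {V : Type*} (G : ℕ → V → V → Prop) (r s : ℕ)
    (C : Finset V) (hcard : 2 ≤ C.card)
    (hstable : vertexStableSCC G r s (↑C : Set V))
    (hfin : causalDiam G r s C ≠ ⊤)
    (x : ℕ) (hx : validRound G r s C x)
    (hmax : ∀ y, validRound G r s C y → y ≤ x) :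
    (∀ x', r ≤ x' → x' ≤ x →
      (x' : ℕ∞) + roundCausalDiam G x' C ≤ (s : ℕ∞) + 1 ∧
      roundCausalDiam G x' C ≤ causalDiam G r s C) ∧
    max (s + 2 - C.card) r ≤ x := by
  have step : ∀ t : ℕ, (t : ℕ∞) + roundCausalDiam G t C ≤
      ((t + 1 : ℕ) : ℕ∞) + roundCausalDiam G (t + 1) C := by
    intro t
    calc (t : ℕ∞) + roundCausalDiam G t C
        ≤ (t : ℕ∞) + (roundCausalDiam G (t + 1) C + 1) :=
          add_le_add_right roundCausalDiam_succ_le _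
      _ = ((t + 1 : ℕ) : ℕ∞) + roundCausalDiam G (t + 1) C := by push_cast; ring
  have chain : ∀ d x' : ℕ, x' + d = x →
      (x' : ℕ∞) + roundCausalDiam G x' C ≤ (x : ℕ∞) + roundCausalDiam G x C := by
    intro d
    induction d with
    | zero => intro x' h; simp [← h]
    | succ n ih =>
      intro x' h
      calc (x' : ℕ∞) + roundCausalDiam G x' C
          ≤ ((x' + 1 : ℕ) : ℕ∞) + roundCausalDiam G (x' + 1) C := step x'
        _ ≤ (x : ℕ∞) + roundCausalDiam G x C := ih (x' + 1) (by omega)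
  constructor
  · intro x' hrx' hx'x
    have hbound : (x' : ℕ∞) + roundCausalDiam G x' C ≤ (s : ℕ∞) + 1 :=
      le_trans (chain (x - x') x' (by omega)) hx.2.2
    refine ⟨hbound, ?_⟩
    have hvalid' : validRound G r s C x' := ⟨hrx', le_trans hx'x hx.2.1, hbound⟩
    rw [causalDiam, if_pos ⟨x, hx⟩]
    exact le_sSup ⟨x', hvalid', rfl⟩
  · rw [max_le_iff]
    refine ⟨?_, hx.1⟩
    by_cases hcase : s + 2 - C.card ≤ r
    · exact le_trans hcase hx.1
    · set y := s + 2 - C.card with hy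
      have hry : r ≤ y := by omega
      have hys : y ≤ s := by omega
      have hconn : ∀ i, i < C.card - 1 →
          inducedStronglyConnected (G (y + i)) (↑C : Set V) := by
        intro i hi
        exact (hstable (y + i) (by omega) (by omega)).1
      have hD : roundCausalDiam G y C ≤ ((C.card - 1 : ℕ) : ℕ∞) := by
        refine iSup₂_le fun p hp => iSup₂_le fun q hq => ?_
        exact cd_le_of_chain (by omega) (propagation hcard y hconn hp hq)
      have hvalid : validRound G r s C y := by
        refine ⟨hry, hys, ?_⟩
        calc (y : ℕ∞) + roundCausalDiam G y C
            ≤ (y : ℕ∞) + ((C.card - 1 : ℕ) : ℕ∞) := add_le_add_right hD _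
          _ = ((y + (C.card - 1) : ℕ) : ℕ∞) := by push_cast; ring
          _ = ((s + 1 : ℕ) : ℕ∞) := by congr 1; omega
          _ = (s : ℕ∞) + 1 := by push_cast; ring
      exact hmax y hvalid
end

section
/- Consider a dynamic network (G^r)_{r≥1} on n processes such that every G^r has exactly one root component R^r. Then there exists a process p such that cd_1(p,q) < ∞ for all processes q; in fact there is a process p with cd_1(p,q) ≤ n(n−2)+1 for all q. -/
def isRootComponent {V : Type*} (G : V → V → Prop) (R : Set V) : Prop :=
  isSCC G R ∧ ∀ p ∈ R, ∀ q, G q p → q ∈ R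

/-- In any finite preorder-like relation there is a maximal element below `v`. -/
private lemma exists_max_rel {V : Type*} [Fintype V] (r : V → V → Prop)
    (hrefl : ∀ a, r a a) (htrans : ∀ a b c, r a b → r b c → r a c) (v : V) :
    ∃ u, r u v ∧ ∀ w, r w u → r u w := by
  classical
  have key : ∀ n : ℕ, ∀ v : V, ({u | r u v}).ncard ≤ n →
      ∃ u, r u v ∧ ∀ w, r w u → r u w := by
    intro n
    induction n with
    | zero =>
      intro v hv
      exfalso
      have h1 : 0 < ({u | r u v}).ncard :=
        (Set.ncard_pos (Set.toFinite _)).mpr ⟨v, hrefl v⟩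
      omega
    | succ n ih =>
      intro v hv
      by_cases h : ∀ w, r w v → r v w
      · exact ⟨v, hrefl v, h⟩
      · push_neg at h
        obtain ⟨w, hwv, hvw⟩ := h
        have hsub : {u | r u w} ⊂ {u | r u v} := by
          constructor
          · intro u hu; exact htrans _ _ _ hu hwv
          · intro hc
            exact hvw (hc (hrefl v))
        have hlt := Set.ncard_lt_ncard hsub (Set.toFinite _)
        obtain ⟨u, huw, hmax⟩ := ih w (by omega)
        exact ⟨u, htrans _ _ _ huw hwv, hmax⟩
  exact key _ v le_rfl

/-- A set closed under predecessors contains everything that reaches it. -/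
private lemma closed_mem {V : Type*} (Gr : V → V → Prop) (S : Set V)
    (hclosed : ∀ a b, Gr a b → b ∈ S → a ∈ S) {x v : V} (hv : v ∈ S)
    (hx : reach Gr x v) : x ∈ S := by
  induction hx using Relation.ReflTransGen.head_induction_on with
  | refl => exact hv
  | head hab _ ih => exact hclosed _ _ hab ih

/-- Any nonempty predecessor-closed set contains a root component. -/
private lemma exists_root_in {V : Type*} [Fintype V] (Gr : V → V → Prop) (S : Set V)
    (hne : S.Nonempty) (hclosed : ∀ a b, Gr a b → b ∈ S → a ∈ S) :
    ∃ R, R ⊆ S ∧ isRootComponent Gr R := by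
  obtain ⟨v, hv⟩ := hne
  obtain ⟨u, huv, hmax⟩ := exists_max_rel (reach Gr) (fun a => Relation.ReflTransGen.refl)
    (fun a b c hab hbc => hab.trans hbc) v
  refine ⟨{x | reach Gr u x ∧ reach Gr x u}, ?_,
    ⟨⟨u, Relation.ReflTransGen.refl, Relation.ReflTransGen.refl⟩, ?_⟩, ?_⟩
  · intro x hx
    exact closed_mem Gr S hclosed hv (hx.2.trans huv)
  · rintro q ⟨huq, hqu⟩ x
    constructor
    · rintro ⟨hux, hxu⟩
      exact ⟨hqu.trans hux, hxu.trans huq⟩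
    · rintro ⟨hqx, hxq⟩
      exact ⟨huq.trans hqx, hxq.trans hqu⟩
  · rintro x ⟨hux, hxu⟩ q hqx
    have hqu : reach Gr q u := (Relation.ReflTransGen.single hqx).trans hxu
    exact ⟨hmax q hqu, hqu⟩

/-- In a dynamic network on `n` processes where every round graph has exactly
one root component, there is a process `p` that causally influences every
process: `cd_1(p,q) < ∞` for all `q`, indeed `cd_1(p,q) ≤ n(n−2)+1`. -/
theorem root_influences_all {V : Type*} [Fintype V] [Nonempty V]
    (G : ℕ → V → V → Prop)
    (hroot : ∀ r : ℕ, 1 ≤ r → ∃! R : Set V, isRootComponent (G r) R) :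
    ∃ p : V, (∀ q : V, cd G 1 p q ≠ ⊤) ∧
      ∀ q : V, cd G 1 p q ≤
        ((Fintype.card V * (Fintype.card V - 2) + 1 : ℕ) : ℕ∞) := by
  classical
  set n := Fintype.card V with hn
  set N := n * (n - 2) + 1 with hNdef
  -- the unique root component of round k+1
  have hroot' : ∀ k : ℕ, ∃! R : Set V, isRootComponent (G (k + 1)) R :=
    fun k => hroot (k + 1) (Nat.le_add_left 1 k)
  set R : ℕ → Set V := fun k => (hroot' k).choose with hRdef
  have hR : ∀ k, isRootComponent (G (k + 1)) (R k) := fun k => (hroot' k).choose_spec.1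
  have hRuniq : ∀ k R', isRootComponent (G (k + 1)) R' → R' = R k :=
    fun k R' h => (hroot' k).choose_spec.2 R' h
  have hRne : ∀ k, (R k).Nonempty := fun k => (hR k).1.1
  set ρ : ℕ → V := fun k => (hRne k).choose with hρdef
  have hρ : ∀ k, ρ k ∈ R k := fun k => (hRne k).choose_spec
  -- pigeonhole: some p is a chosen root vertex at least n-1 times among rounds 1..N
  obtain ⟨p, -, hp⟩ := Finset.exists_lt_card_fiber_of_mul_lt_card_of_maps_to
    (s := Finset.range N) (t := (Finset.univ : Finset V)) (f := ρ) (n := n - 2)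
    (fun a _ => Finset.mem_univ _)
    (by simp only [Finset.card_univ, Finset.card_range, ← hn, hNdef]; omega)
  -- influence sets
  set T : ℕ → Set V := fun k => {q | causalChain G 1 p q k} with hTdef
  have hpT0 : p ∈ T 0 := ⟨fun _ => p, rfl, rfl, fun i hi => absurd hi (Nat.not_lt_zero i)⟩
  have hmono : ∀ k, T k ⊆ T (k + 1) := by
    intro k q hq
    obtain ⟨f, hf0, hfk, hst⟩ := hq
    refine ⟨fun i => f (min i k), by simp [hf0], ?_, ?_⟩
    · show f (min (k + 1) k) = q
      rw [min_eq_right (Nat.le_succ k)]; exact hfk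
    · intro i hi
      rcases Nat.lt_or_ge i k with h | h
      · show G (1 + i) (f (min i k)) (f (min (i + 1) k)) ∨ f (min i k) = f (min (i + 1) k)
        rw [min_eq_left h.le, min_eq_left h]; exact hst i h
      · have hik : i = k := by omega
        subst hik
        right
        show f (min i i) = f (min (i + 1) i)
        rw [min_self, min_eq_right (Nat.le_succ i)]
  have hpT : ∀ k, p ∈ T k := by
    intro k
    induction k with
    | zero => exact hpT0
    | succ k ih => exact hmono k ih
  have hstep : ∀ k q q', q ∈ T k → G (k + 1) q q' → q' ∈ T (k + 1) := by
    intro k q q' hq hedge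
    obtain ⟨f, hf0, hfk, hst⟩ := hq
    refine ⟨fun i => if i ≤ k then f i else q', by simp [hf0], by simp, ?_⟩
    intro i hi
    rcases Nat.lt_or_ge i k with h | h
    · show G (1 + i) (if i ≤ k then f i else q') (if i + 1 ≤ k then f (i + 1) else q') ∨
        (if i ≤ k then f i else q') = (if i + 1 ≤ k then f (i + 1) else q')
      rw [if_pos h.le, if_pos (by omega : i + 1 ≤ k)]; exact hst i h
    · have hik : i = k := by omega
      subst hik
      show G (1 + i) (if i ≤ i then f i else q') (if i + 1 ≤ i then f (i + 1) else q') ∨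
        (if i ≤ i then f i else q') = (if i + 1 ≤ i then f (i + 1) else q')
      rw [if_pos le_rfl, if_neg (Nat.not_succ_le_self i)]
      left
      rw [Nat.add_comm 1 i, hfk]
      exact hedge
  -- growth lemma
  have hgrow : ∀ k, p ∈ R k → T k ≠ Set.univ → (T k).ncard < (T (k + 1)).ncard := by
    intro k hpR hTne
    have hedge : ∃ q q', q ∈ T k ∧ q' ∉ T k ∧ G (k + 1) q q' := by
      by_contra hcon
      push_neg at hcon
      have hSne : ((T k)ᶜ : Set V).Nonempty := by
        obtain ⟨x, hx⟩ := Set.ne_univ_iff_exists_notMem _ |>.mp hTne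
        exact ⟨x, hx⟩
      have hclosed : ∀ a b, G (k + 1) a b → b ∈ (T k)ᶜ → a ∈ (T k)ᶜ := by
        intro a b hab hb ha
        exact hb (by by_contra hb'; exact hb (False.elim (hcon a b ha hb' hab)))
      obtain ⟨R'', hR''sub, hR''root⟩ := exists_root_in (G (k + 1)) ((T k)ᶜ) hSne hclosed
      have heq : R'' = R k := hRuniq k R'' hR''root
      have hpR'' : p ∈ R'' := heq ▸ hpR
      exact hR''sub hpR'' (hpT k)
    obtain ⟨q, q', hq, hq', he⟩ := hedge
    have hq'T : q' ∈ T (k + 1) := hstep k q q' hq he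
    have hss : T k ⊂ T (k + 1) := ⟨hmono k, fun hc => hq' (hc hq'T)⟩
    exact Set.ncard_lt_ncard hss (Set.toFinite _)
  -- cardinality grows with the number of rounds where p is the chosen root vertex
  have hcard : ∀ k, T k = Set.univ ∨
      1 + ((Finset.range k).filter (fun i => ρ i = p)).card ≤ (T k).ncard := by
    intro k
    induction k with
    | zero =>
      right
      have h1 : 0 < (T 0).ncard := (Set.ncard_pos (Set.toFinite _)).mpr ⟨p, hpT0⟩
      simp only [Finset.range_zero, Finset.filter_empty, Finset.card_empty]
      omega
    | succ k ih =>
      rcases ih with h | h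
      · left; exact Set.eq_univ_of_univ_subset (h ▸ hmono k)
      · by_cases hu : T k = Set.univ
        · left; exact Set.eq_univ_of_univ_subset (hu ▸ hmono k)
        · right
          by_cases hρp : ρ k = p
          · have hpR : p ∈ R k := hρp ▸ hρ k
            have hlt := hgrow k hpR hu
            have hfil : ((Finset.range (k + 1)).filter (fun i => ρ i = p)).card =
                ((Finset.range k).filter (fun i => ρ i = p)).card + 1 := by
              rw [Finset.range_add_one, Finset.filter_insert, if_pos hρp,
                Finset.card_insert_of_notMem (by simp)]
            omega
          · have hfil : ((Finset.range (k + 1)).filter (fun i => ρ i = p)) =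
                ((Finset.range k).filter (fun i => ρ i = p)) := by
              rw [Finset.range_add_one, Finset.filter_insert, if_neg hρp]
            have hle := Set.ncard_le_ncard (hmono k) (Set.toFinite _)
            rw [hfil]
            omega
  -- conclude: T N = univ
  have hTN : T N = Set.univ := by
    rcases hcard N with h | h
    · exact h
    · refine Set.eq_of_subset_of_ncard_le (Set.subset_univ _) ?_ (Set.toFinite _)
      rw [Set.ncard_univ, Nat.card_eq_fintype_card, ← hn]
      omega
  have hle : ∀ q : V, cd G 1 p q ≤ (N : ℕ∞) := by
    intro q
    have hq : causalChain G 1 p q N := (hTN ▸ Set.mem_univ q : q ∈ T N)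
    exact sInf_le ⟨N, rfl, by omega, hq⟩
  exact ⟨p, fun q => ne_top_of_le_ne_top (WithTop.coe_ne_top) (hle q), hle⟩
end

section
/- Fix a process p in a dynamic network on n processes where each round graph has exactly one root component, and suppose p belongs to the root component in rounds r_1 < r_2 < … < r_{n−1}. Define P_0 = {p} and P_i = P_{i−1} ∪ { q : ∃ q' ∈ P_{i−1} with (q'→q) ∈ G^{r_i} }. Then |P_k| ≥ min{n, k+1} for all k ≥ 0; in particular P_{n−1} = Π. -/
open scoped Classical

/-- `P_0 = {p}` and `P_i = P_{i−1} ∪ {q : ∃ q' ∈ P_{i−1}, (q'→q) ∈ G^{r_i}}`,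
where `rs i` is the round `r_i`. -/
noncomputable def Pset {V : Type*} [Fintype V] (G : ℕ → V → V → Prop)
    (rs : ℕ → ℕ) (p : V) : ℕ → Finset V
  | 0 => {p}
  | i + 1 => Pset G rs p i ∪
      Finset.univ.filter (fun q => ∃ q' ∈ Pset G rs p i, G (rs (i + 1)) q' q)

/-- Every vertex is reachable from some root component. -/
lemma exists_root_reaching {V : Type*} [Fintype V] (G : V → V → Prop) (v : V) :
    ∃ R : Set V, isRootComponent G R ∧ ∀ u ∈ R, reach G u v := by
  classical
  set f : V → ℕ := fun u => (Finset.univ.filter (fun x => reach G x u)).card with hf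
  have hT : v ∈ Finset.univ.filter (fun u => reach G u v) := by
    simp only [Finset.mem_filter, Finset.mem_univ, true_and]; exact Relation.ReflTransGen.refl
  obtain ⟨u, hu, hmin⟩ := Finset.exists_min_image _ f ⟨v, hT⟩
  have huv : reach G u v := by simpa using hu
  refine ⟨{w | reach G u w ∧ reach G w u}, ⟨⟨⟨u, ⟨.refl, .refl⟩⟩, ?_⟩, ?_⟩, ?_⟩
  · rintro q ⟨huq, hqu⟩ w
    constructor
    · rintro ⟨huw, hwu⟩
      exact ⟨Relation.ReflTransGen.trans hqu huw, Relation.ReflTransGen.trans hwu huq⟩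
    · rintro ⟨hqw, hwq⟩
      exact ⟨Relation.ReflTransGen.trans huq hqw, Relation.ReflTransGen.trans hwq hqu⟩
  · rintro x ⟨hux, hxu⟩ q hqx
    have hqu : reach G q u := Relation.ReflTransGen.trans (Relation.ReflTransGen.single hqx) hxu
    have hqT : q ∈ Finset.univ.filter (fun u => reach G u v) := by
      simp only [Finset.mem_filter, Finset.mem_univ, true_and]
      exact Relation.ReflTransGen.trans hqu huv
    have h1 : f u ≤ f q := hmin q hqT
    have hsub : Finset.univ.filter (fun x => reach G x q) ⊆
        Finset.univ.filter (fun x => reach G x u) := by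
      intro x hx
      simp only [Finset.mem_filter, Finset.mem_univ, true_and] at hx ⊢
      exact Relation.ReflTransGen.trans hx hqu
    have heq := Finset.eq_of_subset_of_card_le hsub h1
    have huq : reach G u q := by
      have : u ∈ Finset.univ.filter (fun x => reach G x q) := by
        rw [heq]; simp only [Finset.mem_filter, Finset.mem_univ, true_and]; exact Relation.ReflTransGen.refl
      simpa using this
    exact ⟨huq, hqu⟩
  · rintro w ⟨_, hwu⟩
    exact Relation.ReflTransGen.trans hwu huv

lemma reach_cross {V : Type*} (G : V → V → Prop) (S : Finset V) {a b : V}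
    (h : reach G a b) (ha : a ∈ S) (hb : b ∉ S) :
    ∃ x ∈ S, ∃ y, y ∉ S ∧ G x y := by
  induction h with
  | refl => exact absurd ha hb
  | @tail c d hac hcd ih =>
    by_cases hc : c ∈ S
    · exact ⟨c, hc, d, hb, hcd⟩
    · exact ih hc

lemma Pset_mono {V : Type*} [Fintype V] (G : ℕ → V → V → Prop)
    (rs : ℕ → ℕ) (p : V) (k : ℕ) : Pset G rs p k ⊆ Pset G rs p (k + 1) :=
  Finset.subset_union_left

lemma p_mem_Pset {V : Type*} [Fintype V] (G : ℕ → V → V → Prop)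
    (rs : ℕ → ℕ) (p : V) (k : ℕ) : p ∈ Pset G rs p k := by
  induction k with
  | zero => simp [Pset]
  | succ k ih => exact Pset_mono G rs p k ih

/-- If `p` belongs to the (unique) root component in rounds
`r_1 < r_2 < … < r_{n−1}`, then `|P_k| ≥ min n (k+1)` for all `k`;
in particular `P_{n−1} = Π`. -/
theorem Pset_growth {V : Type*} [Fintype V] (G : ℕ → V → V → Prop)
    (rs : ℕ → ℕ) (hmono : StrictMono rs) (p : V)
    (huniq : ∀ r : ℕ, ∃! R : Set V, isRootComponent (G r) R)
    (hp : ∀ i : ℕ, 1 ≤ i → i ≤ Fintype.card V - 1 →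
      ∀ R : Set V, isRootComponent (G (rs i)) R → p ∈ R) :
    (∀ k : ℕ, min (Fintype.card V) (k + 1) ≤ (Pset G rs p k).card) ∧
    Pset G rs p (Fintype.card V - 1) = Finset.univ := by
  have hcardpos : 1 ≤ Fintype.card V := Fintype.card_pos_iff.mpr ⟨p⟩
  have key : ∀ k : ℕ, min (Fintype.card V) (k + 1) ≤ (Pset G rs p k).card := by
    intro k
    induction k with
    | zero =>
      simp only [Pset, Finset.card_singleton]
      exact min_le_right _ _
    | succ k ih =>
      by_cases hn : Fintype.card V ≤ k + 1
      · calc min (Fintype.card V) (k + 2) ≤ min (Fintype.card V) (k + 1) := by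
              simp [min_le_left, le_min_iff, hn]
          _ ≤ (Pset G rs p k).card := ih
          _ ≤ (Pset G rs p (k + 1)).card := Finset.card_le_card (Pset_mono G rs p k)
      · push_neg at hn
        have hk1 : k + 1 ≤ Fintype.card V - 1 := by omega
        have ihk : k + 1 ≤ (Pset G rs p k).card := by
          have := ih; omega
        by_cases hbig : k + 2 ≤ (Pset G rs p k).card
        · calc min (Fintype.card V) (k + 2) ≤ k + 2 := min_le_right _ _
            _ ≤ (Pset G rs p k).card := hbig
            _ ≤ (Pset G rs p (k + 1)).card :=
              Finset.card_le_card (Pset_mono G rs p k)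
        · -- P_k is a proper subset of univ
          have hlt : (Pset G rs p k).card < Fintype.card V := by omega
          have hne : Pset G rs p k ≠ Finset.univ := by
            intro h; rw [h, Finset.card_univ] at hlt; omega
          obtain ⟨v, hv⟩ : ∃ v, v ∉ Pset G rs p k := by
            by_contra h; push_neg at h
            exact hne (Finset.eq_univ_iff_forall.mpr h)
          obtain ⟨R, hR, hreach⟩ := exists_root_reaching (G (rs (k + 1))) v
          have hpR : p ∈ R := hp (k + 1) (by omega) hk1 R hR
          have hpv : reach (G (rs (k + 1))) p v := hreach p hpR
          obtain ⟨x, hx, y, hy, hxy⟩ :=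
            reach_cross (G (rs (k + 1))) (Pset G rs p k) hpv (p_mem_Pset G rs p k) hv
          have hyP : y ∈ Pset G rs p (k + 1) := by
            simp only [Pset, Finset.mem_union, Finset.mem_filter, Finset.mem_univ, true_and]
            exact Or.inr ⟨x, hx, hxy⟩
          have hsub : insert y (Pset G rs p k) ⊆ Pset G rs p (k + 1) := by
            intro z hz
            rcases Finset.mem_insert.mp hz with h | h
            · exact h ▸ hyP
            · exact Pset_mono G rs p k h
          have hcard : k + 2 ≤ (insert y (Pset G rs p k)).card := by
            rw [Finset.card_insert_of_notMem hy]; omega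
          calc min (Fintype.card V) (k + 2) ≤ k + 2 := min_le_right _ _
            _ ≤ (insert y (Pset G rs p k)).card := hcard
            _ ≤ (Pset G rs p (k + 1)).card := Finset.card_le_card hsub
  refine ⟨key, ?_⟩
  have := key (Fintype.card V - 1)
  have hmin : min (Fintype.card V) (Fintype.card V - 1 + 1) = Fintype.card V := by omega
  rw [hmin] at this
  exact Finset.eq_univ_of_card _ (le_antisymm (Finset.card_le_univ _) (by simpa using this))
end

section
/- Let G' = (V, E') and G'' = (V, E'') be two finite directed graphs on the same vertex set, each having exactly one root component, with the same root component R ⊆ V. Then there exists a finite sequence of graphs G' = G_0, G_1, …, G_k = G'' on V such that consecutive graphs differ in exactly at most one edge (one edge added or removed), and every G_i has exactly one root component, which equals R. -/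
/-- Two graphs differ in at most one (directed) edge. -/
def diffAtMostOneEdge {V : Type*} (G H : V → V → Prop) : Prop :=
  ∃ a b : V, ∀ x y : V, (x ≠ a ∨ y ≠ b) → (G x y ↔ H x y)

lemma reach_mono {V : Type*} {G H : V → V → Prop} (h : ∀ x y, G x y → H x y) {a b : V}
    (hr : reach G a b) : reach H a b :=
  Relation.ReflTransGen.mono h a b hr

lemma reach_mem_of_closed {V : Type*} {G : V → V → Prop} {S : Set V}
    (hcl : ∀ p ∈ S, ∀ q, G q p → q ∈ S) {v p : V} (hp : p ∈ S)
    (hr : reach G v p) : v ∈ S := by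
  induction hr using Relation.ReflTransGen.head_induction_on with
  | refl => exact hp
  | head h _ ih => exact hcl _ ih _ h

lemma exists_reach_from_root {V : Type*} [Finite V] {G : V → V → Prop} {R : Set V}
    (hR : isRootComponent G R) (huniq : ∀ S : Set V, isRootComponent G S → S = R)
    (v : V) : ∃ r ∈ R, reach G r v := by
  by_contra hcon
  push_neg at hcon
  let r : V → V → Prop := fun a b => reach G a b ∧ ¬ reach G b a
  have htrans : ∀ a b c, r a b → r b c → r a c := by
    rintro a b c ⟨hab, hba⟩ ⟨hbc, hcb⟩
    exact ⟨hab.trans hbc, fun hca => hcb (hca.trans hab)⟩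
  have hwf : WellFounded r := by
    have : IsTrans V r := ⟨htrans⟩
    have : IsIrrefl V r := ⟨fun a ⟨h1, h2⟩ => h2 h1⟩
    exact Finite.wellFounded_of_trans_of_irrefl r
  obtain ⟨w, hwS, hwmin⟩ := hwf.has_min {u | reach G u v} ⟨v, Relation.ReflTransGen.refl⟩
  have hmax : ∀ u, reach G u w → reach G w u := by
    intro u hu
    by_contra h
    exact hwmin u (hu.trans hwS) ⟨hu, h⟩
  have hroot : isRootComponent G {x | reach G w x ∧ reach G x w} := by
    refine ⟨⟨⟨w, Relation.ReflTransGen.refl, Relation.ReflTransGen.refl⟩, ?_⟩, ?_⟩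
    · rintro p ⟨hwp, hpw⟩ x
      constructor
      · rintro ⟨hwx, hxw⟩; exact ⟨hpw.trans hwx, hxw.trans hwp⟩
      · rintro ⟨hpx, hxp⟩; exact ⟨hwp.trans hpx, hxp.trans hpw⟩
    · rintro p ⟨hwp, hpw⟩ q hq
      have hqw : reach G q w := (Relation.ReflTransGen.single hq).trans hpw
      exact ⟨hmax q hqw, hqw⟩
  have hwR : w ∈ R := huniq _ hroot ▸ ⟨Relation.ReflTransGen.refl, Relation.ReflTransGen.refl⟩
  exact hcon w hwR hwS

lemma key {V : Type*} [Finite V] {G' G'' : V → V → Prop} {R : Set V}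
    (hR' : isRootComponent G' R) (huniq' : ∀ S : Set V, isRootComponent G' S → S = R)
    (hR'' : isRootComponent G'' R) (huniq'' : ∀ S : Set V, isRootComponent G'' S → S = R)
    (H : V → V → Prop)
    (hsub : ∀ x y, H x y → G' x y ∨ G'' x y)
    (hsup : (∀ x y, G' x y → H x y) ∨ (∀ x y, G'' x y → H x y)) :
    isRootComponent H R ∧ ∀ S : Set V, isRootComponent H S → S = R := by
  have hne : R.Nonempty := hR'.1.1
  have hcl : ∀ p ∈ R, ∀ q, H q p → q ∈ R := by
    intro p hp q hq
    rcases hsub q p hq with h | h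
    · exact hR'.2 p hp q h
    · exact hR''.2 p hp q h
  have hmain : (∀ p ∈ R, ∀ v ∈ R, reach H p v) ∧ (∀ v, ∃ r ∈ R, reach H r v) := by
    rcases hsup with hs | hs
    · refine ⟨fun p hp v hv => reach_mono hs (((hR'.1.2 p hp v).mp hv).1), fun v => ?_⟩
      obtain ⟨r, hr, hrv⟩ := exists_reach_from_root hR' huniq' v
      exact ⟨r, hr, reach_mono hs hrv⟩
    · refine ⟨fun p hp v hv => reach_mono hs (((hR''.1.2 p hp v).mp hv).1), fun v => ?_⟩
      obtain ⟨r, hr, hrv⟩ := exists_reach_from_root hR'' huniq'' v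
      exact ⟨r, hr, reach_mono hs hrv⟩
  obtain ⟨hmut, hall⟩ := hmain
  have hroot : isRootComponent H R := by
    refine ⟨⟨hne, fun p hp v => ⟨fun hv => ⟨hmut p hp v hv, hmut v hv p hp⟩,
      fun ⟨_, hvp⟩ => reach_mem_of_closed hcl hp hvp⟩⟩, hcl⟩
  refine ⟨hroot, fun S hS => ?_⟩
  obtain ⟨s, hs⟩ := hS.1.1
  obtain ⟨r, hrR, hrs⟩ := hall s
  have hrS : r ∈ S := by
    refine reach_mem_of_closed ?_ hs hrs
    intro p hp q hq
    exact hS.2 p hp q hq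
  ext v
  rw [hS.1.2 r hrS v, hroot.1.2 r hrR v]

/-- If `G'` and `G''` on the same vertex set each have exactly one root
component, equal to the same `R`, then there is a sequence of graphs from `G'`
to `G''`, consecutive ones differing in at most one edge, all having exactly
one root component, equal to `R`. -/
theorem graph_sequence_same_root {V : Type*} [Fintype V]
    (G' G'' : V → V → Prop) (R : Set V)
    (hR' : isRootComponent G' R) (huniq' : ∀ S : Set V, isRootComponent G' S → S = R)
    (hR'' : isRootComponent G'' R) (huniq'' : ∀ S : Set V, isRootComponent G'' S → S = R) :
    ∃ (k : ℕ) (H : ℕ → V → V → Prop),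
      H 0 = G' ∧ H k = G'' ∧
      (∀ i < k, diffAtMostOneEdge (H i) (H (i + 1))) ∧
      (∀ i ≤ k, isRootComponent (H i) R ∧
        ∀ S : Set V, isRootComponent (H i) S → S = R) := by
  classical
  set L₁ : List (V × V) :=
    (Finset.univ.filter fun p : V × V => G'' p.1 p.2 ∧ ¬ G' p.1 p.2).toList with hL₁def
  set L₂ : List (V × V) :=
    (Finset.univ.filter fun p : V × V => G' p.1 p.2 ∧ ¬ G'' p.1 p.2).toList with hL₂def
  have hL₁ : ∀ p : V × V, p ∈ L₁ ↔ (G'' p.1 p.2 ∧ ¬ G' p.1 p.2) := by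
    intro p; simp [hL₁def]
  have hL₂ : ∀ p : V × V, p ∈ L₂ ↔ (G' p.1 p.2 ∧ ¬ G'' p.1 p.2) := by
    intro p; simp [hL₂def]
  set k₁ := L₁.length with hk₁
  set k₂ := L₂.length with hk₂
  set H : ℕ → V → V → Prop := fun i x y =>
    if i ≤ k₁ then (G' x y ∨ (x, y) ∈ L₁.take i)
    else ((G' x y ∨ (x, y) ∈ L₁) ∧ (x, y) ∉ L₂.take (i - k₁)) with hHdef
  have takediff : ∀ (L : List (V × V)) (n : ℕ) (hn : n < L.length) (x y : V),
      (x ≠ (L.get ⟨n, hn⟩).1 ∨ y ≠ (L.get ⟨n, hn⟩).2) →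
      ((x, y) ∈ L.take (n + 1) ↔ (x, y) ∈ L.take n) := by
    intro L n hn x y hxy
    rw [List.take_succ]
    simp only [List.getElem?_eq_getElem hn, Option.toList_some, List.mem_append,
      List.mem_singleton]
    constructor
    · rintro (h | h)
      · exact h
      · exfalso
        rcases hxy with h' | h' <;> [exact h' (congrArg Prod.fst h); exact h' (congrArg Prod.snd h)]
    · exact Or.inl
  refine ⟨k₁ + k₂, H, ?_, ?_, ?_, ?_⟩
  · funext x y
    simp only [hHdef, Nat.zero_le, if_true, List.take_zero, List.not_mem_nil, or_false]
  · funext x y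
    rcases Nat.eq_zero_or_pos k₂ with h0 | h0
    · have hT : k₁ + k₂ ≤ k₁ := by omega
      have hG : ∀ x y, G' x y → G'' x y := by
        intro x y hg
        by_contra hng
        have : (x, y) ∈ L₂ := (hL₂ (x, y)).mpr ⟨hg, hng⟩
        have : L₂.length ≠ 0 := List.ne_nil_of_mem this ∘ List.length_eq_zero_iff.mp
        omega
      simp only [hHdef, hT, if_true]
      rw [List.take_of_length_le (by omega)]
      apply propext
      constructor
      · rintro (h | h)
        · exact hG x y h
        · exact ((hL₁ (x, y)).mp h).1
      · intro h
        by_cases hg : G' x y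
        · exact Or.inl hg
        · exact Or.inr ((hL₁ (x, y)).mpr ⟨h, hg⟩)
    · have hT : ¬ (k₁ + k₂ ≤ k₁) := by omega
      simp only [hHdef, hT, if_false]
      have : L₂.take (k₁ + k₂ - k₁) = L₂ := by
        rw [Nat.add_sub_cancel_left]
        exact List.take_of_length_le (by omega)
      rw [this]
      apply propext
      constructor
      · rintro ⟨h1 | h1, h2⟩
        · by_contra hg
          exact h2 ((hL₂ (x, y)).mpr ⟨h1, hg⟩)
        · exact ((hL₁ (x, y)).mp h1).1
      · intro h
        refine ⟨?_, fun hm => ((hL₂ (x, y)).mp hm).2 h⟩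
        by_cases hg : G' x y
        · exact Or.inl hg
        · exact Or.inr ((hL₁ (x, y)).mpr ⟨h, hg⟩)
  · intro i hi
    by_cases h1 : i < k₁
    · have h1' : i < L₁.length := by omega
      refine ⟨(L₁.get ⟨i, h1'⟩).1, (L₁.get ⟨i, h1'⟩).2, fun x y hxy => ?_⟩
      simp only [hHdef]
      rw [if_pos (by omega), if_pos (by omega), takediff L₁ i h1' x y hxy]
    · by_cases h2 : i = k₁
      · have hlt : 0 < L₂.length := by omega
        refine ⟨(L₂.get ⟨0, hlt⟩).1, (L₂.get ⟨0, hlt⟩).2, fun x y hxy => ?_⟩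
        simp only [hHdef]
        rw [if_pos (by omega), if_neg (by omega)]
        have he : i + 1 - k₁ = 0 + 1 := by omega
        rw [he, takediff L₂ 0 hlt x y hxy, List.take_zero,
          List.take_of_length_le (show L₁.length ≤ i by omega)]
        simp
      · have hn : i - k₁ < L₂.length := by omega
        refine ⟨(L₂.get ⟨i - k₁, hn⟩).1, (L₂.get ⟨i - k₁, hn⟩).2, fun x y hxy => ?_⟩
        simp only [hHdef]
        rw [if_neg (by omega), if_neg (by omega)]
        have he : i + 1 - k₁ = (i - k₁) + 1 := by omega
        rw [he, takediff L₂ (i - k₁) hn x y hxy]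
  · intro i hi
    apply key hR' huniq' hR'' huniq''
    · intro x y hxy
      simp only [hHdef] at hxy
      split_ifs at hxy with h
      · rcases hxy with h1 | h1
        · exact Or.inl h1
        · exact Or.inr ((hL₁ (x, y)).mp (List.mem_of_mem_take h1)).1
      · rcases hxy.1 with h1 | h1
        · exact Or.inl h1
        · exact Or.inr ((hL₁ (x, y)).mp h1).1
    · by_cases h : i ≤ k₁
      · left
        intro x y hxy
        simp only [hHdef, h, if_true]
        exact Or.inl hxy
      · right
        intro x y hxy
        simp only [hHdef, h, if_false]
        constructor
        · by_cases hg : G' x y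
          · exact Or.inl hg
          · exact Or.inr ((hL₁ (x, y)).mpr ⟨hxy, hg⟩)
        · intro hm
          exact ((hL₂ (x, y)).mp (List.mem_of_mem_take hm)).2 hxy
end

section
/- There exist directed graphs simultaneously satisfying: (1) exactly one root component R, and (2) the expansion properties (a) α-expansion of both in- and out-neighborhoods within R for subsets S ⊆ R with |S| ≤ |R|/2, (b) α-out-expansion for sets S ⊇ R with |S| ≤ n/2, and (c) α-in-expansion for sets S with S ∩ R = ∅ and |S| ≤ n/2. In particular, taking the bidirected version of a union of an undirected α-vertex expander on R and one on V, and deleting all edges pointing into R from outside R, yields such a graph. -/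
open scoped Classical

/-- Vertices outside `S` receiving an edge from `S` (out-neighborhood). -/
noncomputable def Nout {V : Type*} [Fintype V] (G : V → V → Prop)
    (S : Finset V) : Finset V :=
  Finset.univ.filter (fun q => q ∉ S ∧ ∃ s ∈ S, G s q)

/-- Vertices outside `S` having an edge into `S` (in-neighborhood). -/
noncomputable def Nin {V : Type*} [Fintype V] (G : V → V → Prop)
    (S : Finset V) : Finset V :=
  Finset.univ.filter (fun q => q ∉ S ∧ ∃ s ∈ S, G q s)

/-- Neighborhood of `S` in an undirected (symmetric) graph. -/
noncomputable def uN {V : Type*} [Fintype V] (A : V → V → Prop)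
    (S : Finset V) : Finset V :=
  Finset.univ.filter (fun q => q ∉ S ∧ ∃ s ∈ S, A s q)

/-- `A` is an undirected α-vertex expander on the vertex set `W`. -/
def isExpanderOn {V : Type*} [Fintype V] (A : V → V → Prop) (W : Finset V)
    (α : ℝ) : Prop :=
  Symmetric A ∧ (∀ x y, A x y → x ∈ W ∧ y ∈ W) ∧
    ∀ S ⊆ W, 2 * S.card ≤ W.card → α * S.card ≤ ((uN A S).card : ℝ)

lemma expander_comp_big {V : Type*} [Fintype V] {A : V → V → Prop} {W : Finset V}
    {α : ℝ} (hα : 0 < α) (h : isExpanderOn A W α) {x : V} (hx : x ∈ W) :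
    W.card < 2 * (W.filter (fun v => Relation.ReflTransGen A x v)).card := by
  set C := W.filter (fun v => Relation.ReflTransGen A x v) with hC
  by_contra hlt
  push_neg at hlt
  have hsub : C ⊆ W := Finset.filter_subset _ _
  have hexp := h.2.2 C hsub hlt
  have hempty : uN A C = ∅ := by
    ext q
    simp only [uN, Finset.mem_filter, Finset.mem_univ, true_and, Finset.notMem_empty,
      iff_false, not_and, not_exists]
    intro hq s hs hAs
    apply hq
    rw [hC, Finset.mem_filter] at hs ⊢
    exact ⟨(h.2.1 s q hAs).2, hs.2.tail hAs⟩
  rw [hempty] at hexp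
  simp only [Finset.card_empty, Nat.cast_zero] at hexp
  have hxC : x ∈ C := by rw [hC, Finset.mem_filter]; exact ⟨hx, Relation.ReflTransGen.refl⟩
  have : (0:ℝ) < C.card := by
    have := Finset.card_pos.mpr ⟨x, hxC⟩
    exact_mod_cast this
  nlinarith

lemma expander_reach {V : Type*} [Fintype V] {A : V → V → Prop} {W : Finset V}
    {α : ℝ} (hα : 0 < α) (h : isExpanderOn A W α) {x y : V} (hx : x ∈ W) (hy : y ∈ W) :
    Relation.ReflTransGen A x y := by
  have h1 := expander_comp_big hα h hx
  have h2 := expander_comp_big hα h hy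
  set Cx := W.filter (fun v => Relation.ReflTransGen A x v) with hCx
  set Cy := W.filter (fun v => Relation.ReflTransGen A y v) with hCy
  have hu : (Cx ∪ Cy) ⊆ W := Finset.union_subset (Finset.filter_subset _ _) (Finset.filter_subset _ _)
  have hcard := Finset.card_union_add_card_inter Cx Cy
  have : (Cx ∩ Cy).Nonempty := by
    rw [← Finset.card_pos]
    have := Finset.card_le_card hu
    omega
  obtain ⟨z, hz⟩ := this
  rw [Finset.mem_inter, hCx, hCy, Finset.mem_filter, Finset.mem_filter] at hz
  have hsymm : Symmetric (Relation.ReflTransGen A) := fun a b hab => by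
    induction hab with
    | refl => exact Relation.ReflTransGen.refl
    | tail _ hbc ih => exact Relation.ReflTransGen.head (h.1 hbc) ih
  exact hz.1.2.trans (hsymm hz.2.2)

/-- Taking the bidirected union of an α-vertex expander on `R` and one on the
whole vertex set, and deleting every directed edge pointing into `R` from
outside `R`, yields a directed graph whose unique root component is `R`, and
which satisfies the expansion properties (a), (b), (c). -/
theorem expander_with_unique_root {V : Type*} [Fintype V]
    (α : ℝ) (hα : 0 < α) (R : Finset V) (hR : R.Nonempty)
    (HR HV : V → V → Prop)
    (hHR : isExpanderOn HR R α) (hHV : isExpanderOn HV Finset.univ α) :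
    ∃ G : V → V → Prop,
      G = (fun p q => (HR p q ∨ HV p q) ∧ ¬(q ∈ R ∧ p ∉ R)) ∧
      isRootComponent G (↑R : Set V) ∧
      (∀ S : Set V, isRootComponent G S → S = (↑R : Set V)) ∧
      -- (a) expansion of out- and in-neighborhoods within R
      (∀ S : Finset V, S ⊆ R → 2 * S.card ≤ R.card →
        α * S.card ≤ (((Nout G S) ∩ R).card : ℝ) ∧
        α * S.card ≤ (((Nin G S) ∩ R).card : ℝ)) ∧
      -- (b) out-expansion for supersets of R
      (∀ S : Finset V, R ⊆ S → 2 * S.card ≤ Fintype.card V →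
        α * S.card ≤ ((Nout G S).card : ℝ)) ∧
      -- (c) in-expansion for sets disjoint from R
      (∀ S : Finset V, Disjoint S R → 2 * S.card ≤ Fintype.card V →
        α * S.card ≤ ((Nin G S).card : ℝ)) := by

  classical
  set G : V → V → Prop := fun p q => (HR p q ∨ HV p q) ∧ ¬(q ∈ R ∧ p ∉ R) with hG
  -- HR edges are G edges
  have hHRG : ∀ {p q}, HR p q → G p q := by
    intro p q hpq
    refine ⟨Or.inl hpq, ?_⟩
    rintro ⟨-, hp⟩
    exact hp (hHR.2.1 p q hpq).1
  -- reachability within R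
  have hreachR : ∀ {x y}, x ∈ R → y ∈ R → reach G x y := by
    intro x y hx hy
    exact Relation.ReflTransGen.mono (fun a b hab => hHRG hab) _ _ (expander_reach hα hHR hx hy)
  -- closure under reverse reachability for root sets
  have hrev : ∀ (S : Set V), (∀ p ∈ S, ∀ q, G q p → q ∈ S) →
      ∀ {v p}, reach G v p → p ∈ S → v ∈ S := by
    intro S hroot v p hvp hp
    induction hvp using Relation.ReflTransGen.head_induction_on with
    | refl => exact hp
    | head hab _ ih => exact hroot _ ih _ hab
  -- R as a set has the root property
  have hRroot : ∀ p ∈ (↑R : Set V), ∀ q, G q p → q ∈ (↑R : Set V) := by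
    intro p hp q hqp
    by_contra hq
    exact hqp.2 ⟨hp, hq⟩
  -- every vertex is reachable from any r0 ∈ R
  have hreachAll : ∀ r0 ∈ R, ∀ v, reach G r0 v := by
    intro r0 hr0 v
    have h0 : Relation.ReflTransGen HV r0 v :=
      expander_reach hα hHV (Finset.mem_univ _) (Finset.mem_univ _)
    induction h0 with
    | refl => exact Relation.ReflTransGen.refl
    | @tail b c _ hbc ih =>
      by_cases hc : c ∈ R
      · exact hreachR hr0 hc
      · exact ih.tail ⟨Or.inr hbc, fun hh => hc hh.1⟩
  have hRcomp : isRootComponent G (↑R : Set V) := by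
    refine ⟨⟨⟨hR.choose, hR.choose_spec⟩, ?_⟩, hRroot⟩
    intro p hp v
    constructor
    · intro hv
      exact ⟨hreachR hp hv, hreachR hv hp⟩
    · intro ⟨_, hvp⟩
      exact hrev _ hRroot hvp hp
  refine ⟨G, rfl, hRcomp, ?_, ?_, ?_, ?_⟩
  · -- uniqueness
    intro S hS
    obtain ⟨⟨⟨s, hs⟩, hscc⟩, hroot⟩ := hS
    obtain ⟨r0, hr0⟩ := hR
    have hr0S : r0 ∈ S := hrev S hroot (hreachAll r0 hr0 s) hs
    ext v
    constructor
    · intro hv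
      have := ((hscc r0 hr0S v).mp hv).2
      exact hrev _ hRroot this hr0
    · intro hv
      exact (hscc r0 hr0S v).mpr ⟨hreachR hr0 hv, hreachR hv hr0⟩
  · -- (a)
    intro S hSR hcard
    have hexp := hHR.2.2 S hSR hcard
    have hout : uN HR S ⊆ (Nout G S) ∩ R := by
      intro q hq
      simp only [uN, Finset.mem_filter, Finset.mem_univ, true_and] at hq
      obtain ⟨hqS, s, hsS, hA⟩ := hq
      refine Finset.mem_inter.mpr ⟨?_, (hHR.2.1 s q hA).2⟩
      simp only [Nout, Finset.mem_filter, Finset.mem_univ, true_and]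
      exact ⟨hqS, s, hsS, hHRG hA⟩
    have hin : uN HR S ⊆ (Nin G S) ∩ R := by
      intro q hq
      simp only [uN, Finset.mem_filter, Finset.mem_univ, true_and] at hq
      obtain ⟨hqS, s, hsS, hA⟩ := hq
      refine Finset.mem_inter.mpr ⟨?_, (hHR.2.1 s q hA).2⟩
      simp only [Nin, Finset.mem_filter, Finset.mem_univ, true_and]
      exact ⟨hqS, s, hsS, hHRG (hHR.1 hA)⟩
    constructor
    · exact hexp.trans (by exact_mod_cast Finset.card_le_card hout)
    · exact hexp.trans (by exact_mod_cast Finset.card_le_card hin)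
  · -- (b)
    intro S hRS hcard
    have hexp := hHV.2.2 S (Finset.subset_univ S) (by rwa [Finset.card_univ])
    have hsub : uN HV S ⊆ Nout G S := by
      intro q hq
      simp only [uN, Finset.mem_filter, Finset.mem_univ, true_and] at hq
      obtain ⟨hqS, s, hsS, hA⟩ := hq
      simp only [Nout, Finset.mem_filter, Finset.mem_univ, true_and]
      exact ⟨hqS, s, hsS, Or.inr hA, fun hh => hqS (hRS hh.1)⟩
    exact hexp.trans (by exact_mod_cast Finset.card_le_card hsub)
  · -- (c)
    intro S hdisj hcard
    have hexp := hHV.2.2 S (Finset.subset_univ S) (by rwa [Finset.card_univ])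
    have hsub : uN HV S ⊆ Nin G S := by
      intro q hq
      simp only [uN, Finset.mem_filter, Finset.mem_univ, true_and] at hq
      obtain ⟨hqS, s, hsS, hA⟩ := hq
      simp only [Nin, Finset.mem_filter, Finset.mem_univ, true_and]
      refine ⟨hqS, s, hsS, Or.inr (hHV.1 hA), fun hh => ?_⟩
      exact (Finset.disjoint_left.mp hdisj hsS) hh.1
    exact hexp.trans (by exact_mod_cast Finset.card_le_card hsub)
end

section
/- In the network-approximation algorithm, the local approximation underapproximates the true round-t graph: if at the end of round r process p's approximation A_p|t contains an edge (v→w), then (v→w) ∈ G^t; moreover A_p|t then contains every edge (v'→w) with v' an in-neighbor of w in G^t (in-neighborhoods are recorded completely or not at all). -/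
/-- `Ap G t r p v w`: at the end of round `r`, the edge `(v→w)` belongs to
process `p`'s approximation `A_p|t` of the round-`t` communication graph.
Initially (end of "round 0") approximations are empty. In round `r+1`,
process `p` records its own round-`(r+1)` in-neighborhood when `r+1 = t`, and
merges the approximations received from all its round-`(r+1)` in-neighbors. -/
def Ap {V : Type*} (G : ℕ → V → V → Prop) (t : ℕ) : ℕ → V → V → V → Prop
  | 0, _, _, _ => False
  | r + 1, p, v, w =>
      (r + 1 = t ∧ w = p ∧ G t v w) ∨ Ap G t r p v w ∨
        ∃ q, G (r + 1) q p ∧ Ap G t r q v w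

/-- The local approximation underapproximates the true round-`t` graph and
records in-neighborhoods completely or not at all: if `(v→w) ∈ A_p|t` at the
end of round `r`, then `(v→w) ∈ G^t` and every in-edge `(v'→w)` of `w` in
`G^t` is also in `A_p|t`. Moreover `A_p|t` is edgeless at the end of any
round `r < t`. -/
theorem approximation_underapproximates {V : Type*} (G : ℕ → V → V → Prop)
    (t : ℕ) (ht : 1 ≤ t) :
    (∀ r < t, ∀ p v w : V, ¬ Ap G t r p v w) ∧
    (∀ (r : ℕ) (p v w : V), Ap G t r p v w →
      G t v w ∧ ∀ v' : V, G t v' w → Ap G t r p v' w) := by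
  constructor
  · intro r
    induction r with
    | zero => intro _ p v w h; exact h
    | succ r ih =>
      intro hr p v w h
      rcases h with ⟨h1, _⟩ | h | ⟨q, _, h⟩
      · omega
      · exact ih (by omega) p v w h
      · exact ih (by omega) q v w h
  · intro r
    induction r with
    | zero => intro p v w h; exact absurd h id
    | succ r ih =>
      intro p v w h
      rcases h with ⟨h1, h2, h3⟩ | h | ⟨q, hq, h⟩
      · exact ⟨h3, fun v' hv' => Or.inl ⟨h1, h2, hv'⟩⟩
      · obtain ⟨hg, hall⟩ := ih p v w h
        exact ⟨hg, fun v' hv' => Or.inr (Or.inl (hall v' hv'))⟩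
      · obtain ⟨hg, hall⟩ := ih q v w h
        exact ⟨hg, fun v' hv' => Or.inr (Or.inr ⟨q, hq, hall v' hv'⟩)⟩
end

section
/- In the network-approximation algorithm, if at some round r > s the locally detected component C_p|s (defined as A_p|s if A_p|s is strongly connected and nonempty, else empty) is nonempty, then p belongs to the unique root component R^s of round s. -/
/-- The vertex set of `A_p|t` at the end of round `r`: `p` together with all
endpoints of recorded edges. -/
def ApVerts {V : Type*} (G : ℕ → V → V → Prop) (t r : ℕ) (p : V) : Set V :=
  {v | v = p ∨ ∃ w, Ap G t r p v w ∨ Ap G t r p w v}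

lemma Ap_sound {V : Type*} (G : ℕ → V → V → Prop) (t : ℕ) :
    ∀ r p v w, Ap G t r p v w → G t v w := by
  intro r
  induction r with
  | zero => intro p v w h; exact h.elim
  | succ r ih =>
    intro p v w h
    rcases h with ⟨rfl, _, h⟩ | h | ⟨q, _, h⟩
    · exact h
    · exact ih p v w h
    · exact ih q v w h

lemma Ap_mono {V : Type*} (G : ℕ → V → V → Prop) (t : ℕ) :
    ∀ r r', r ≤ r' → ∀ p v w, Ap G t r p v w → Ap G t r' p v w := by
  intro r r' h
  induction r' with
  | zero => obtain rfl := Nat.le_zero.mp h; exact fun _ _ _ hh => hh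
  | succ r' ih =>
    intro p v w hh
    rcases Nat.lt_or_ge r (r' + 1) with h1 | h1
    · exact Or.inr (Or.inl (ih (Nat.lt_succ_iff.mp h1) p v w hh))
    · have : r = r' + 1 := le_antisymm h h1
      subst this; exact hh

lemma Ap_in_complete {V : Type*} (G : ℕ → V → V → Prop) (t : ℕ) :
    ∀ r p v w u, Ap G t r p v w → G t u w → Ap G t r p u w := by
  intro r
  induction r with
  | zero => intro _ _ _ _ h; exact h.elim
  | succ r ih =>
    intro p v w u h hu
    rcases h with ⟨ht, hw, _⟩ | h | ⟨q, hq, h⟩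
    · exact Or.inl ⟨ht, hw, hw ▸ hu⟩
    · exact Or.inr (Or.inl (ih p v w u h hu))
    · exact Or.inr (Or.inr ⟨q, hq, ih q v w u h hu⟩)

/-- If at some round `r > s` the locally detected component `C_p|s` is
nonempty — i.e. `A_p|s` is strongly connected — then `p` belongs to the unique
root component `R^s` of round `s`. -/
theorem detected_component_implies_root {V : Type*} [Fintype V]
    (G : ℕ → V → V → Prop) (s r : ℕ) (hs : 1 ≤ s) (hr : s < r) (p : V)
    (R : Set V) (hR : isRootComponent (G s) R)
    (huniq : ∀ R' : Set V, isRootComponent (G s) R' → R' = R)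
    (hconn : ∀ v ∈ ApVerts G s r p, ∀ w ∈ ApVerts G s r p,
      Relation.ReflTransGen (fun a b => Ap G s r p a b) v w) :
    p ∈ R := by
  set C := ApVerts G s r p with hCdef
  have hpC : p ∈ C := Or.inl rfl
  -- C is closed under in-edges of G s
  have hclo : ∀ w ∈ C, ∀ u, G s u w → u ∈ C := by
    intro w hw u hu
    have hpath := hconn p hpC w hw
    rcases Relation.ReflTransGen.cases_tail hpath with heq | ⟨x, _, hx⟩
    · -- w = p : the edge u→p is recorded at round s
      have hu' : G s u p := heq ▸ hu
      obtain ⟨m, rfl⟩ : ∃ m, s = m + 1 := ⟨s - 1, by omega⟩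
      have hbase : Ap G (m + 1) (m + 1) p u p := Or.inl ⟨rfl, rfl, hu'⟩
      have hrec := Ap_mono G (m + 1) (m + 1) r (by omega) p u p hbase
      exact Or.inr ⟨p, Or.inl hrec⟩
    · have hrec := Ap_in_complete G s r p x w u hx hu
      exact Or.inr ⟨w, Or.inl hrec⟩
  -- C is closed under G s-reachability backwards
  have hback : ∀ v q, q ∈ C → Relation.ReflTransGen (G s) v q → v ∈ C := by
    intro v q hq hvq
    induction hvq using Relation.ReflTransGen.head_induction_on with
    | refl => exact hq
    | head h _ ih => exact hclo _ ih _ h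
  have lift : ∀ a b, Relation.ReflTransGen (fun a b => Ap G s r p a b) a b →
      Relation.ReflTransGen (G s) a b := fun a b h =>
    Relation.ReflTransGen.mono (fun x y hx => Ap_sound G s r p x y hx) a b h
  have hSCC : isSCC (G s) C := by
    refine ⟨⟨p, hpC⟩, ?_⟩
    intro q hq v
    constructor
    · intro hv
      exact ⟨lift _ _ (hconn q hq v hv), lift _ _ (hconn v hv q hq)⟩
    · rintro ⟨_, hvq⟩
      exact hback v q hq hvq
  have hroot : isRootComponent (G s) C := ⟨hSCC, fun q hq u hu => hclo q hq u hu⟩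
  have hCR := huniq C hroot
  exact hCR ▸ hpC
end

section
/- Consensus is impossible in weakly connected dynamic networks with two root components: if the (static, same in every round) communication graph is partitioned into strongly connected components C_0, C_1, C_2 such that C_0 and C_1 have only outgoing edges (into C_2) and C_2 has no outgoing edges, then no deterministic algorithm solves binary consensus. Specifically, in the run where all of C_0 starts with input 0 and all of C_1 with input 1, the processes of C_0 can never be causally influenced by any process of C_1 and vice versa, so by indistinguishability from the all-0 and all-1 runs respectively (using validity in the form: if all inputs equal v, the decision is v), agreement is violated. -/
/-- A deterministic synchronous full-information algorithm: a state type, a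
message type, an input map, a message-sending function, a state-transition
function taking the messages received from the current in-neighbors, and a
(irrevocable, via agreement over all rounds) decision function. -/
structure Algo (V : Type*) where
  σ : Type
  μ : Type
  init : V → Bool → σ
  msg : σ → μ
  step : σ → (V → Option μ) → σ
  dec : σ → Option Bool

/-- The run of algorithm `A` on the static communication graph `G` with binary
inputs `inp`: `run A G inp r p` is the state of process `p` at the beginning
of round `r+1` (after `r` rounds). -/
def Algo.run {V : Type*} (A : Algo V) (G : V → V → Prop)
    [DecidableRel G] (inp : V → Bool) : ℕ → V → A.σ
  | 0, p => A.init p (inp p)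
  | r + 1, p => A.step (A.run G inp r p)
      (fun q => if G q p then some (A.msg (A.run G inp r q)) else none)

/-- `A` solves binary consensus on the static graph `G`: in every run,
Termination (every process eventually decides), Agreement (all decided values
are equal), and Validity (any decided value is some process's input) hold. -/
def Algo.solvesConsensus {V : Type*} (A : Algo V) (G : V → V → Prop)
    [DecidableRel G] : Prop :=
  ∀ inp : V → Bool,
    (∀ p : V, ∃ r : ℕ, (A.dec (A.run G inp r p)).isSome) ∧
    (∀ (p q : V) (r r' : ℕ) (b b' : Bool),
      A.dec (A.run G inp r p) = some b → A.dec (A.run G inp r' q) = some b' →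
      b = b') ∧
    (∀ (p : V) (r : ℕ) (b : Bool),
      A.dec (A.run G inp r p) = some b → ∃ q : V, inp q = b)

lemma run_eq_on_closed {V : Type*} (A : Algo V) (G : V → V → Prop)
    [DecidableRel G] (S : Set V) (hS : ∀ p q, G p q → q ∈ S → p ∈ S)
    (inp inp' : V → Bool) (h : ∀ p ∈ S, inp p = inp' p) :
    ∀ r, ∀ p ∈ S, A.run G inp r p = A.run G inp' r p := by
  intro r
  induction r with
  | zero => intro p hp; simp [Algo.run, h p hp]
  | succ r ih =>
    intro p hp
    simp only [Algo.run]
    rw [ih p hp]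
    congr 1
    funext q
    by_cases hq : G q p
    · simp [hq, ih q (hS q p hq hp)]
    · simp [hq]

/-- Consensus is impossible on a static weakly structured graph with two root
components: if the vertex set is partitioned into strongly connected parts
`C₀, C₁, C₂` where `C₀` and `C₁` (both nonempty) have edges only inside
themselves or into `C₂`, and `C₂` has edges only inside itself, then no
deterministic algorithm solves binary consensus. -/
theorem consensus_impossible_two_roots {V : Type*} [Fintype V]
    (G : V → V → Prop) [DecidableRel G] (C₀ C₁ C₂ : Set V)
    (h0 : C₀.Nonempty) (h1 : C₁.Nonempty)
    (hdisj01 : Disjoint C₀ C₁) (hdisj02 : Disjoint C₀ C₂) (hdisj12 : Disjoint C₁ C₂)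
    (hcover : C₀ ∪ C₁ ∪ C₂ = Set.univ)
    (hsc0 : inducedStronglyConnected G C₀)
    (hsc1 : inducedStronglyConnected G C₁)
    (hsc2 : inducedStronglyConnected G C₂)
    (hedges : ∀ p q : V, G p q →
      (p ∈ C₀ ∧ (q ∈ C₀ ∨ q ∈ C₂)) ∨
      (p ∈ C₁ ∧ (q ∈ C₁ ∨ q ∈ C₂)) ∨
      (p ∈ C₂ ∧ q ∈ C₂)) :
    ¬ ∃ A : Algo V, A.solvesConsensus G := by
  rintro ⟨A, hA⟩
  classical
  obtain ⟨p₀, hp₀⟩ := h0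
  obtain ⟨p₁, hp₁⟩ := h1
  set inp : V → Bool := fun p => if p ∈ C₁ then true else false with hinp
  obtain ⟨hterm, hagree, -⟩ := hA inp
  have hclosed0 : ∀ p q, G p q → q ∈ C₀ → p ∈ C₀ := by
    intro p q hpq hq
    rcases hedges p q hpq with ⟨hp, _⟩ | ⟨hp, hq'⟩ | ⟨hp, hq'⟩
    · exact hp
    · rcases hq' with hq' | hq'
      · exact absurd (hdisj01 (Set.singleton_subset_iff.mpr hq)
          (Set.singleton_subset_iff.mpr hq')) (by simp)
      · exact absurd (hdisj02 (Set.singleton_subset_iff.mpr hq)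
          (Set.singleton_subset_iff.mpr hq')) (by simp)
    · exact absurd (hdisj02 (Set.singleton_subset_iff.mpr hq)
        (Set.singleton_subset_iff.mpr hq')) (by simp)
  have hclosed1 : ∀ p q, G p q → q ∈ C₁ → p ∈ C₁ := by
    intro p q hpq hq
    rcases hedges p q hpq with ⟨hp, hq'⟩ | ⟨hp, _⟩ | ⟨hp, hq'⟩
    · rcases hq' with hq' | hq'
      · exact absurd (hdisj01 (Set.singleton_subset_iff.mpr hq')
          (Set.singleton_subset_iff.mpr hq)) (by simp)
      · exact absurd (hdisj12 (Set.singleton_subset_iff.mpr hq)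
          (Set.singleton_subset_iff.mpr hq')) (by simp)
    · exact hp
    · exact absurd (hdisj12 (Set.singleton_subset_iff.mpr hq)
        (Set.singleton_subset_iff.mpr hq')) (by simp)
  have heq0 : ∀ r, ∀ p ∈ C₀, A.run G inp r p = A.run G (fun _ => false) r p := by
    refine run_eq_on_closed A G C₀ hclosed0 _ _ ?_
    intro p hp
    have : p ∉ C₁ := fun hp1 => absurd (hdisj01 (Set.singleton_subset_iff.mpr hp)
      (Set.singleton_subset_iff.mpr hp1)) (by simp)
    simp [hinp, this]
  have heq1 : ∀ r, ∀ p ∈ C₁, A.run G inp r p = A.run G (fun _ => true) r p := by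
    refine run_eq_on_closed A G C₁ hclosed1 _ _ ?_
    intro p hp
    simp [hinp, hp]
  obtain ⟨r₀, hr₀⟩ := hterm p₀
  obtain ⟨r₁, hr₁⟩ := hterm p₁
  obtain ⟨b₀, hb₀⟩ := Option.isSome_iff_exists.mp hr₀
  obtain ⟨b₁, hb₁⟩ := Option.isSome_iff_exists.mp hr₁
  -- b₀ = false by validity in all-false run
  obtain ⟨-, -, hvalid0⟩ := hA (fun _ => false)
  obtain ⟨-, -, hvalid1⟩ := hA (fun _ => true)
  have hb0 : b₀ = false := by
    obtain ⟨q, hq⟩ := hvalid0 p₀ r₀ b₀ (by rw [← heq0 r₀ p₀ hp₀]; exact hb₀)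
    exact hq.symm
  have hb1 : b₁ = true := by
    obtain ⟨q, hq⟩ := hvalid1 p₁ r₁ b₁ (by rw [← heq1 r₁ p₁ hp₁]; exact hb₁)
    exact hq.symm
  have := hagree p₀ p₁ r₀ r₁ b₀ b₁ hb₀ hb₁
  rw [hb0, hb1] at this
  exact absurd this (by simp)
end
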